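/- Suppose in addition that σ(s) ≥ 0 and σ′(s) ≥ 0 for all s ∈ ℝ. Then for every (s, t) ∈ ℝ², ω_{φ(s,t)}(Dφ(s,t)·e₁, Dφ(s,t)·e₂) ≥ 0, where e₁, e₂ is the standard basis of ℝ²; that is, the pullback of ω along φ is a non-negative multiple of the area form ds ∧ dt, so ω restricts non-negatively to the perturbed surface parametrized by φ with its given orientation. -/

import Mathlib

/-!
The tangent vectors of `φ` at `(s, t)` are `(1, 0, σ′ sin t, σ′ cos t)` and
`(0, 1, σ cos t, −σ sin t)`, and on them `ω` evaluates to `e^s (σ(s) + σ′(s))`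
since `sin² t + cos² t = 1`.
-/

open Real ContinuousLinearMap

noncomputable def surfaceMap (σ : ℝ → ℝ) (p : ℝ × ℝ) : Fin 4 → ℝ :=
  ![p.1, p.2, σ p.1 * sin p.2, σ p.1 * cos p.2]

noncomputable def omegaForm (p v w : Fin 4 → ℝ) : ℝ :=
  exp (p 0) * (cos (p 1) * (v 0 * w 2 - v 2 * w 0) - sin (p 1) * (v 0 * w 3 - v 3 * w 0)
    - sin (p 1) * (v 1 * w 2 - v 2 * w 1) - cos (p 1) * (v 1 * w 3 - v 3 * w 1))

theorem hasFDerivAt_surfaceMap {σ : ℝ → ℝ} {σ' s : ℝ} (hσ : HasDerivAt σ σ' s) (t : ℝ) :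
    HasFDerivAt (surfaceMap σ)
      (pi ![fst ℝ ℝ ℝ, snd ℝ ℝ ℝ, (σ' * sin t) • fst ℝ ℝ ℝ + (σ s * cos t) • snd ℝ ℝ ℝ,
        (σ' * cos t) • fst ℝ ℝ ℝ - (σ s * sin t) • snd ℝ ℝ ℝ]) (s, t) := by
  have hσ₁ : HasFDerivAt (fun p : ℝ × ℝ => σ p.1) (σ' • fst ℝ ℝ ℝ) (s, t) :=
    hσ.comp_hasFDerivAt (s, t) hasFDerivAt_fst
  refine hasFDerivAt_pi.2 fun i => ?_
  fin_cases i
  · exact hasFDerivAt_fst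
  · exact hasFDerivAt_snd
  · refine (hσ₁.mul ((hasDerivAt_sin t).comp_hasFDerivAt (s, t) hasFDerivAt_snd)).congr_fderiv ?_
    ext <;> simp [mul_comm]
  · refine (hσ₁.mul ((hasDerivAt_cos t).comp_hasFDerivAt (s, t) hasFDerivAt_snd)).congr_fderiv ?_
    ext <;> simp [sub_eq_add_neg, mul_comm]

theorem omegaForm_fderiv_surfaceMap {σ : ℝ → ℝ} {σ' s : ℝ} (hσ : HasDerivAt σ σ' s) (t : ℝ) :
    omegaForm (surfaceMap σ (s, t)) (fderiv ℝ (surfaceMap σ) (s, t) (1, 0))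
      (fderiv ℝ (surfaceMap σ) (s, t) (0, 1)) = exp s * (σ s + σ') := by
  rw [(hasFDerivAt_surfaceMap hσ t).fderiv]
  simp only [omegaForm, surfaceMap, pi_apply, add_apply, sub_apply, smul_apply, coe_fst',
    coe_snd', smul_eq_mul, Matrix.cons_val_zero, Matrix.cons_val_one, Matrix.cons_val_two,
    Matrix.cons_val_three, Matrix.head_cons, Matrix.tail_cons]
  linear_combination exp s * (σ s + σ') * sin_sq_add_cos_sq t

/-- If `σ ≥ 0` and `σ′ ≥ 0` everywhere, then the pullback of the 2-form
`ω = d(e^s(cos θ dx − sin θ dy))` on `ℝ⁴` along `φ(s, t) = (s, t, σ(s) sin t, σ(s) cos t)`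
is a non-negative multiple of `ds ∧ dt`: for every `(s, t)`,
`ω_{φ(s,t)}(Dφ(s,t)·e₁, Dφ(s,t)·e₂) ≥ 0`, where `e₁ = (1,0)`, `e₂ = (0,1)`. -/
theorem pullback_two_form_nonneg (σ : ℝ → ℝ) (hσ : Differentiable ℝ σ)
    (hσ0 : ∀ s, 0 ≤ σ s) (hσ'0 : ∀ s, 0 ≤ deriv σ s)
    (φ : ℝ × ℝ → Fin 4 → ℝ)
    (hφ : ∀ p : ℝ × ℝ, φ p = ![p.1, p.2, σ p.1 * Real.sin p.2, σ p.1 * Real.cos p.2])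
    (ω : (Fin 4 → ℝ) → (Fin 4 → ℝ) → (Fin 4 → ℝ) → ℝ)
    (hω : ∀ p v w, ω p v w = Real.exp (p 0) *
      (Real.cos (p 1) * (v 0 * w 2 - v 2 * w 0)
        - Real.sin (p 1) * (v 0 * w 3 - v 3 * w 0)
        - Real.sin (p 1) * (v 1 * w 2 - v 2 * w 1)
        - Real.cos (p 1) * (v 1 * w 3 - v 3 * w 1))) :
    ∀ (s t : ℝ),
      0 ≤ ω (φ (s, t)) (fderiv ℝ φ (s, t) ((1 : ℝ), (0 : ℝ)))
            (fderiv ℝ φ (s, t) ((0 : ℝ), (1 : ℝ))) := by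
  obtain rfl : φ = surfaceMap σ := funext hφ
  obtain rfl : ω = omegaForm := funext fun p => funext fun v => funext (hω p v)
  intro s t
  rw [omegaForm_fderiv_surfaceMap (hσ s).hasDerivAt t]
  exact mul_nonneg (exp_pos s).le (add_nonneg (hσ0 s) (hσ'0 s))
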